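/- Let r ∈ ℝ, T > 0. Suppose u ∈ L¹([0,T]; 𝓛_r), where 𝓛_r is the space of measurable functions f on [0,∞) with ‖f‖_{𝓛_r} = sup_{x≥0} e^{−rx}|f(x)| < ∞. Define w(τ,x) = ∫₀^τ ∫₀^∞ G(τ−s,x,y) u(s,y) dy ds with G the Dirichlet heat kernel on [0,∞). Then there is a constant C = C(r,T) with sup_{τ∈[0,t]} sup_{x≥0} e^{−rx} |w(τ,x)| ≤ C ∫₀^t ‖u(s,·)‖_{𝓛_r} ds for all t ∈ [0,T]. -/

import Mathlib

/-! Dropping the reflected term, `G(t,x,y) ≤ (4πt)^{-1/2} e^{-(x-y)²/4t}`, and completing the square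
gives `e^{r(y-x)} e^{-(x-y)²/4t} = e^{r²t} e^{-(y-x-2rt)²/4t}`. Hence a function with
`|f(y)| ≤ ‖f‖_{𝓛_r} e^{ry}` satisfies `e^{-rx} |∫₀^∞ G(t,x,y) f(y) dy| ≤ e^{r²t} ‖f‖_{𝓛_r}`,
and integrating in time yields the estimate with `C = e^{r²T}`. -/

open MeasureTheory Set

/-- The Dirichlet heat kernel on `[0,∞)`. -/
noncomputable def Gker (t x y : ℝ) : ℝ :=
  (Real.sqrt (4 * Real.pi * t))⁻¹ *
    (Real.exp (-(x - y) ^ 2 / (4 * t)) - Real.exp (-(x + y) ^ 2 / (4 * t)))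

/-- The `𝓛_r` norm `‖f‖_{𝓛_r} = sup_{x ≥ 0} e^{−rx} |f(x)|`. -/
noncomputable def LrNorm (r : ℝ) (f : ℝ → ℝ) : ℝ :=
  ⨆ x : {x : ℝ // 0 ≤ x}, Real.exp (-r * x) * |f x|

open Real

def MemLr (r : ℝ) (f : ℝ → ℝ) : Prop :=
  BddAbove (Set.range fun x : {x : ℝ // 0 ≤ x} => Real.exp (-r * x) * |f x|)

lemma exp_neg_sq_div_eq {t : ℝ} (ht : 0 < t) (c y : ℝ) :
    exp (-(y - c) ^ 2 / (4 * t)) = exp (-(1 / (4 * t)) * (y - c) ^ 2) := by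
  congr 1; field_simp

lemma integral_exp_neg_sq_div {t : ℝ} (ht : 0 < t) (c : ℝ) :
    ∫ y, exp (-(y - c) ^ 2 / (4 * t)) = √(4 * π * t) := by
  simp_rw [exp_neg_sq_div_eq ht]
  rw [integral_sub_right_eq_self (fun y => exp (-(1 / (4 * t)) * y ^ 2)) c, integral_gaussian]
  congr 1
  field_simp

lemma integrable_exp_neg_sq_div {t : ℝ} (ht : 0 < t) (c : ℝ) :
    Integrable fun y => exp (-(y - c) ^ 2 / (4 * t)) := by
  simp_rw [exp_neg_sq_div_eq ht]
  exact (integrable_exp_neg_mul_sq (by positivity)).comp_sub_right c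

-- Junk values: `√` of a nonpositive real is `0`, and `0⁻¹ = 0`.
lemma Gker_of_nonpos {t : ℝ} (ht : t ≤ 0) (x y : ℝ) : Gker t x y = 0 := by
  have : √(4 * π * t) = 0 := sqrt_eq_zero_of_nonpos (by nlinarith [pi_pos])
  simp [Gker, this]

lemma Gker_nonneg {t x y : ℝ} (hx : 0 ≤ x) (hy : 0 ≤ y) : 0 ≤ Gker t x y := by
  rcases le_or_gt t 0 with ht | ht
  · exact (Gker_of_nonpos ht x y).ge
  · refine mul_nonneg (by positivity) (sub_nonneg.2 (exp_le_exp.2 ?_))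
    exact div_le_div_of_nonneg_right (by nlinarith) (by positivity)

lemma Gker_le {t : ℝ} (ht : 0 < t) (x y : ℝ) :
    Gker t x y ≤ (√(4 * π * t))⁻¹ * exp (-(x - y) ^ 2 / (4 * t)) := by
  unfold Gker
  gcongr
  exact sub_le_self _ (exp_pos _).le

lemma exp_mul_exp_neg_sq_div {t : ℝ} (ht : 0 < t) (r x y : ℝ) :
    exp (r * y) * exp (-(x - y) ^ 2 / (4 * t)) =
      exp (r * x) * exp (r ^ 2 * t) * exp (-(y - (x + 2 * r * t)) ^ 2 / (4 * t)) := by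
  simp only [← exp_add]
  congr 1
  field_simp
  ring

lemma LrNorm_nonneg {r : ℝ} {f : ℝ → ℝ} (hf : MemLr r f) : 0 ≤ LrNorm r f :=
  (by positivity : 0 ≤ exp (-r * 0) * |f 0|).trans (le_ciSup hf ⟨0, le_rfl⟩)

lemma abs_le_LrNorm_mul_exp {r : ℝ} {f : ℝ → ℝ} (hf : MemLr r f) {y : ℝ} (hy : 0 ≤ y) :
    |f y| ≤ LrNorm r f * exp (r * y) := by
  have h : exp (-r * y) * |f y| ≤ LrNorm r f := le_ciSup hf ⟨y, hy⟩
  rw [← le_div_iff₀' (exp_pos _)] at h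
  rwa [div_eq_mul_inv, ← exp_neg, neg_mul, neg_neg] at h

lemma norm_integral_Gker_mul_le (r : ℝ) {t x : ℝ} (ht : 0 ≤ t) (hx : 0 ≤ x) {f : ℝ → ℝ}
    (hf : MemLr r f) :
    ‖∫ y in Ioi 0, Gker t x y * f y‖ ≤ exp (r * x) * exp (r ^ 2 * t) * LrNorm r f := by
  rcases ht.eq_or_lt with rfl | ht
  · simp only [Gker_of_nonpos le_rfl, zero_mul, integral_zero, norm_zero]
    have := LrNorm_nonneg hf
    positivity
  set c := x + 2 * r * t
  set K := exp (r * x) * exp (r ^ 2 * t) * LrNorm r f * (√(4 * π * t))⁻¹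
  have hK : 0 ≤ K := by have := LrNorm_nonneg hf; positivity
  have hB : Integrable fun y => K * exp (-(y - c) ^ 2 / (4 * t)) :=
    (integrable_exp_neg_sq_div ht c).const_mul K
  have hpointwise : ∀ y ∈ Ioi (0 : ℝ), ‖Gker t x y * f y‖ ≤ K * exp (-(y - c) ^ 2 / (4 * t)) := by
    intro y hy
    calc ‖Gker t x y * f y‖ = Gker t x y * |f y| := by
          rw [Real.norm_eq_abs, abs_mul, abs_of_nonneg (Gker_nonneg hx (le_of_lt hy))]
      _ ≤ (√(4 * π * t))⁻¹ * exp (-(x - y) ^ 2 / (4 * t)) * (LrNorm r f * exp (r * y)) :=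
          mul_le_mul (Gker_le ht x y) (abs_le_LrNorm_mul_exp hf (le_of_lt hy)) (abs_nonneg _)
            (by positivity)
      _ = (√(4 * π * t))⁻¹ * LrNorm r f * (exp (r * y) * exp (-(x - y) ^ 2 / (4 * t))) := by
          ring
      _ = K * exp (-(y - c) ^ 2 / (4 * t)) := by
          rw [exp_mul_exp_neg_sq_div ht]; ring
  calc ‖∫ y in Ioi 0, Gker t x y * f y‖
      ≤ ∫ y in Ioi 0, K * exp (-(y - c) ^ 2 / (4 * t)) :=
        norm_integral_le_of_norm_le hB.integrableOn
          ((ae_restrict_iff' measurableSet_Ioi).2 (Filter.Eventually.of_forall hpointwise))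
    _ ≤ ∫ y, K * exp (-(y - c) ^ 2 / (4 * t)) :=
        setIntegral_le_integral hB (Filter.Eventually.of_forall fun y => by positivity)
    _ = exp (r * x) * exp (r ^ 2 * t) * LrNorm r f := by
        rw [integral_const_mul, integral_exp_neg_sq_div ht c, inv_mul_cancel_right₀ (by positivity)]

lemma norm_duhamel_le (r : ℝ) {T τ x : ℝ} (hτ0 : 0 ≤ τ) (hτT : τ ≤ T) (hx : 0 ≤ x)
    {u : ℝ → ℝ → ℝ} (hu : ∀ s ∈ Icc 0 T, MemLr r (u s))
    (hint : IntervalIntegrable (fun s => LrNorm r (u s)) volume 0 τ) :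
    ‖∫ s in 0..τ, ∫ y in Ioi 0, Gker (τ - s) x y * u s y‖ ≤
      exp (r * x) * exp (r ^ 2 * T) * ∫ s in 0..τ, LrNorm r (u s) := by
  rw [← intervalIntegral.integral_const_mul]
  refine intervalIntegral.norm_integral_le_of_norm_le hτ0
    (Filter.Eventually.of_forall fun s hs => ?_) (hint.const_mul _)
  have hsT : s ∈ Icc 0 T := ⟨hs.1.le, hs.2.trans hτT⟩
  have := LrNorm_nonneg (hu s hsT)
  refine (norm_integral_Gker_mul_le r (sub_nonneg.2 hs.2) hx (hu s hsT)).trans ?_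
  gcongr
  linarith [hs.1]

theorem stmt16_general (r T : ℝ) :
    ∃ C > 0, ∀ u : ℝ → ℝ → ℝ,
      Measurable (fun pr : ℝ × ℝ => u pr.1 pr.2) →
      (∀ s ∈ Icc (0:ℝ) T,
        BddAbove (Set.range fun x : {x : ℝ // 0 ≤ x} => Real.exp (-r * x) * |u s x|)) →
      IntegrableOn (fun s => LrNorm r (u s)) (Icc (0:ℝ) T) →
      ∀ t ∈ Icc (0:ℝ) T, ∀ τ ∈ Icc (0:ℝ) t, ∀ x : ℝ, 0 ≤ x →
        Real.exp (-r * x) *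
            |∫ s in (0:ℝ)..τ, ∫ y in Set.Ioi (0:ℝ), Gker (τ - s) x y * u s y| ≤
          C * ∫ s in (0:ℝ)..t, LrNorm r (u s) := by
  refine ⟨exp (r ^ 2 * T), exp_pos _, fun u _ hu hint t ⟨ht0, htT⟩ τ ⟨hτ0, hτt⟩ x hx => ?_⟩
  have hint' : ∀ b ∈ Icc 0 T, IntervalIntegrable (fun s => LrNorm r (u s)) volume 0 b :=
    fun b hb => (intervalIntegrable_iff_integrableOn_Icc_of_le hb.1).2
      (hint.mono_set (Icc_subset_Icc le_rfl hb.2))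
  have hmono : ∫ s in 0..τ, LrNorm r (u s) ≤ ∫ s in 0..t, LrNorm r (u s) :=
    intervalIntegral.integral_mono_interval le_rfl hτ0 hτt
      ((ae_restrict_iff' measurableSet_Ioc).2 (Filter.Eventually.of_forall fun s hs =>
        LrNorm_nonneg (hu s ⟨hs.1.le, hs.2.trans htT⟩)))
      (hint' t ⟨ht0, htT⟩)
  calc exp (-r * x) * |∫ s in 0..τ, ∫ y in Ioi 0, Gker (τ - s) x y * u s y|
      ≤ exp (-r * x) * (exp (r * x) * exp (r ^ 2 * T) * ∫ s in 0..τ, LrNorm r (u s)) :=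
        mul_le_mul_of_nonneg_left (norm_duhamel_le r hτ0 (hτt.trans htT) hx hu
          (hint' τ ⟨hτ0, hτt.trans htT⟩)) (exp_pos _).le
    _ = exp (r ^ 2 * T) * ∫ s in 0..τ, LrNorm r (u s) := by
        rw [← mul_assoc, ← mul_assoc, ← exp_add, neg_mul, neg_add_cancel, exp_zero, one_mul]
    _ ≤ exp (r ^ 2 * T) * ∫ s in 0..t, LrNorm r (u s) := by gcongr

/-- If `u ∈ L¹([0,T]; 𝓛_r)` and `w(τ,x) = ∫₀^τ ∫₀^∞ G(τ−s,x,y) u(s,y) dy ds`, then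
`sup_{τ∈[0,t]} sup_{x≥0} e^{−rx} |w(τ,x)| ≤ C(r,T) ∫₀^t ‖u(s,·)‖_{𝓛_r} ds` for `t ∈ [0,T]`. -/
theorem stmt16 (r T : ℝ) (hT : 0 < T) :
    ∃ C > 0, ∀ u : ℝ → ℝ → ℝ,
      Measurable (fun pr : ℝ × ℝ => u pr.1 pr.2) →
      (∀ s ∈ Icc (0:ℝ) T,
        BddAbove (Set.range fun x : {x : ℝ // 0 ≤ x} => Real.exp (-r * x) * |u s x|)) →
      IntegrableOn (fun s => LrNorm r (u s)) (Icc (0:ℝ) T) →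
      ∀ t ∈ Icc (0:ℝ) T, ∀ τ ∈ Icc (0:ℝ) t, ∀ x : ℝ, 0 ≤ x →
        Real.exp (-r * x) *
            |∫ s in (0:ℝ)..τ, ∫ y in Set.Ioi (0:ℝ), Gker (τ - s) x y * u s y| ≤
          C * ∫ s in (0:ℝ)..t, LrNorm r (u s) :=
  stmt16_general r T
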